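/- arXiv:2408.11204 — 5 statements merged into one kernel-verified Lean document; each statement's English description precedes it below -/
import Mathlib

section
/- Let (𝔤, ⟨·,·⟩) be a finite-dimensional real Lie algebra with inner product, and define ad* by ⟨ad*_u v, w⟩ = ⟨v, [u,w]⟩ for all u,v,w. On 𝔤 = su(2)×su(2), identifying su(2) with ℝ³ via the cross product, with bracket [(Y₁,X₁),(Y₃,X₃)] = ad_{(Y₁,X₁)}(Y₃,X₃) = (−X₁×Y₃ − Y₁×X₃ + X₁×X₃, −X₁×X₃) and inner product ⟨(Y₁,X₁),(Y₂,X₂)⟩ = Y₁·Y₂ + 2 X₁·X₂, one has ad*_{(Y₁,X₁)}(Y₂,X₂) = (X₁×Y₂, ½(Y₁×Y₂ − X₁×Y₂) + X₁×X₂). -/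
/-- The cross product on ℝ³. -/
noncomputable def cross3 (a b : Fin 3 → ℝ) : Fin 3 → ℝ :=
  ![a 1 * b 2 - a 2 * b 1, a 2 * b 0 - a 0 * b 2, a 0 * b 1 - a 1 * b 0]

/-- The dot product on ℝ³. -/
noncomputable def dot3 (a b : Fin 3 → ℝ) : ℝ := ∑ i : Fin 3, a i * b i

/-- Inner product on su(2)×su(2) ≅ ℝ³×ℝ³: ⟨(Y₁,X₁),(Y₂,X₂)⟩ = Y₁·Y₂ + 2X₁·X₂. -/
noncomputable def ip2 (u v : (Fin 3 → ℝ) × (Fin 3 → ℝ)) : ℝ :=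
  dot3 u.1 v.1 + 2 * dot3 u.2 v.2

/-- ad of the Abelian extension:
ad_{(Y₁,X₁)}(Y₃,X₃) = (−X₁×Y₃ − Y₁×X₃ + X₁×X₃, −X₁×X₃). -/
noncomputable def ad2 (u w : (Fin 3 → ℝ) × (Fin 3 → ℝ)) : (Fin 3 → ℝ) × (Fin 3 → ℝ) :=
  (-(cross3 u.2 w.1) - cross3 u.1 w.2 + cross3 u.2 w.2, -(cross3 u.2 w.2))

/-- The claimed ad* operator:
ad*_{(Y₁,X₁)}(Y₂,X₂) = (X₁×Y₂, ½(Y₁×Y₂ − X₁×Y₂) + X₁×X₂). -/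
noncomputable def adStar2 (u v : (Fin 3 → ℝ) × (Fin 3 → ℝ)) : (Fin 3 → ℝ) × (Fin 3 → ℝ) :=
  (cross3 u.2 v.1, (1/2 : ℝ) • (cross3 u.1 v.1 - cross3 u.2 v.1) + cross3 u.2 v.2)

/-- adStar2 satisfies the defining property ⟨ad*_u v, w⟩ = ⟨v, ad_u w⟩. -/
theorem adStar_formula (u v w : (Fin 3 → ℝ) × (Fin 3 → ℝ)) :
    ip2 (adStar2 u v) w = ip2 v (ad2 u w) := by
  simp only [ip2, adStar2, ad2, dot3, cross3, Fin.sum_univ_three]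
  simp [Matrix.cons_val_zero, Matrix.cons_val_one, Matrix.head_cons, Pi.add_apply,
    Pi.smul_apply, Pi.sub_apply, Pi.neg_apply, smul_eq_mul]
  ring
end

section
/- Consider the linear ODE system a'(t) = (λ m) a₋(t), a₋'(t) = −(λ m) a(t) together with c'(t) − m c₋(t) = a(t), c₋'(t) + m c(t) = a₋(t), where λ = (ℓ+2)/(ℓ+1) and m ≠ 0, ℓ ≥ 1 real parameters. The unique solution with c(0) = c₋(0) = 0 satisfies c(t) = (2(ℓ+1)/m) sin(mt/(2(ℓ+1))) [a(0) cos((2ℓ+3)mt/(2(ℓ+1))) + a₋(0) sin((2ℓ+3)mt/(2(ℓ+1)))]. In particular c(t) = c₋(t) = 0 at the times t = 4kπ(ℓ+1)/m for all integers k. -/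
/-!
The pair `(a, a₋)` rotates with angular speed `ω = λ m`, and `(c, c₋)` rotates with speed `m`
while being forced by `(a, a₋)`. For a rotation system `x' = ω y + f`, `y' = -ω x + g` the
energy `x² + y²` of the difference of two solutions is constant, so solutions are determined by
their initial values. It therefore suffices to exhibit explicit solutions. Writing
`ω = μ + ν` and `m = ν - μ` with `μ = m / (2(ℓ+1))`, `ν = (2ℓ+3) m / (2(ℓ+1))`, the addition
formulas show that `c(t) = sin (μ t) / μ · (a(0) cos (ν t) + a₋(0) sin (ν t))` solves the forced
equation, and it vanishes whenever `μ t ∈ 2πℤ`.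
-/

open Real

noncomputable def sinusoid (ω a b t : ℝ) : ℝ := a * cos (ω * t) + b * sin (ω * t)

theorem sinusoid_neg (ω a b t : ℝ) : sinusoid ω (-a) (-b) t = -sinusoid ω a b t := by
  simp only [sinusoid]; ring

theorem sinusoid_zero (ω a b : ℝ) : sinusoid ω a b 0 = a := by
  simp [sinusoid]

theorem hasDerivAt_sinusoid (ω a b t : ℝ) :
    HasDerivAt (sinusoid ω a b) (ω * sinusoid ω b (-a) t) t := by
  have hω : HasDerivAt (fun t => ω * t) ω t := hasDerivAt_const_mul ω
  refine ((hω.cos.const_mul a).add (hω.sin.const_mul b)).congr_deriv ?_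
  simp only [sinusoid]; ring

theorem hasDerivAt_sin_div_mul_sinusoid {μ : ℝ} (hμ : μ ≠ 0) (ν a b t : ℝ) :
    HasDerivAt (fun t => sin (μ * t) / μ * sinusoid ν a b t)
      ((ν - μ) * (sin (μ * t) / μ * sinusoid ν b (-a) t) + sinusoid (μ + ν) a b t) t := by
  have hμt : HasDerivAt (fun t => μ * t) μ t := hasDerivAt_const_mul μ
  refine ((hμt.sin.div_const μ).mul (hasDerivAt_sinusoid ν a b t)).congr_deriv ?_
  simp only [sinusoid, add_mul, cos_add, sin_add]
  field_simp
  ring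

theorem eq_zero_of_hasDerivAt_rotation {ω : ℝ} {u v : ℝ → ℝ}
    (hu : ∀ t, HasDerivAt u (ω * v t) t) (hv : ∀ t, HasDerivAt v (-(ω * u t)) t)
    (hu0 : u 0 = 0) (hv0 : v 0 = 0) (t : ℝ) : u t = 0 ∧ v t = 0 := by
  have henergy : ∀ t, HasDerivAt (fun t => u t * u t + v t * v t) 0 t := fun t => by
    refine (((hu t).mul (hu t)).add ((hv t).mul (hv t))).congr_deriv ?_; ring
  have hconst := is_const_of_deriv_eq_zero (fun t => (henergy t).differentiableAt)
    (fun t => (henergy t).deriv) t 0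
  simp only [hu0, hv0, mul_zero, add_zero] at hconst
  exact mul_self_add_mul_self_eq_zero.mp hconst

theorem rotation_system_unique {ω : ℝ} {f g x₁ y₁ x₂ y₂ : ℝ → ℝ}
    (hx₁ : ∀ t, HasDerivAt x₁ (ω * y₁ t + f t) t)
    (hy₁ : ∀ t, HasDerivAt y₁ (-(ω * x₁ t) + g t) t)
    (hx₂ : ∀ t, HasDerivAt x₂ (ω * y₂ t + f t) t)
    (hy₂ : ∀ t, HasDerivAt y₂ (-(ω * x₂ t) + g t) t)
    (hx0 : x₁ 0 = x₂ 0) (hy0 : y₁ 0 = y₂ 0) : x₁ = x₂ ∧ y₁ = y₂ := by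
  have hdiff := eq_zero_of_hasDerivAt_rotation (u := x₁ - x₂) (v := y₁ - y₂)
    (fun t => ((hx₁ t).sub (hx₂ t)).congr_deriv (by simp only [Pi.sub_apply]; ring))
    (fun t => ((hy₁ t).sub (hy₂ t)).congr_deriv (by simp only [Pi.sub_apply]; ring))
    (sub_eq_zero.mpr hx0) (sub_eq_zero.mpr hy0)
  exact ⟨funext fun t => sub_eq_zero.mp (hdiff t).1, funext fun t => sub_eq_zero.mp (hdiff t).2⟩

/-- The Jacobi-field block system: a' = λm a₋, a₋' = −λm a, c' − m c₋ = a,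
c₋' + m c = a₋ with λ = (ℓ+2)/(ℓ+1).  The solution with c(0) = c₋(0) = 0 is
given by an explicit formula, vanishing at t = 4kπ(ℓ+1)/m. -/
theorem jacobi_block_solution
    (ℓ m : ℝ) (hℓ : 1 ≤ ℓ) (hm : m ≠ 0)
    (a aneg c cneg : ℝ → ℝ)
    (ha : ∀ t, HasDerivAt a ((ℓ + 2) / (ℓ + 1) * m * aneg t) t)
    (haneg : ∀ t, HasDerivAt aneg (-((ℓ + 2) / (ℓ + 1) * m) * a t) t)
    (hc : ∀ t, HasDerivAt c (m * cneg t + a t) t)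
    (hcneg : ∀ t, HasDerivAt cneg (-(m * c t) + aneg t) t)
    (hc0 : c 0 = 0) (hcneg0 : cneg 0 = 0) :
    (∀ t, c t = 2 * (ℓ + 1) / m * sin (m * t / (2 * (ℓ + 1))) *
        (a 0 * cos ((2 * ℓ + 3) * m * t / (2 * (ℓ + 1))) +
         aneg 0 * sin ((2 * ℓ + 3) * m * t / (2 * (ℓ + 1))))) ∧
    (∀ k : ℤ, c (4 * k * π * (ℓ + 1) / m) = 0 ∧ cneg (4 * k * π * (ℓ + 1) / m) = 0) := by
  have hℓ1 : ℓ + 1 ≠ 0 := by linarith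
  set μ := m / (2 * (ℓ + 1)) with hμ_def
  set ν := (2 * ℓ + 3) * m / (2 * (ℓ + 1)) with hν_def
  have hμ : μ ≠ 0 := div_ne_zero hm (mul_ne_zero two_ne_zero hℓ1)
  have hνμ : ν - μ = m := by rw [hμ_def, hν_def]; field_simp; ring
  have hμν : μ + ν = (ℓ + 2) / (ℓ + 1) * m := by rw [hμ_def, hν_def]; field_simp; ring
  obtain ⟨ha_eq, haneg_eq⟩ :
      a = sinusoid (μ + ν) (a 0) (aneg 0) ∧ aneg = sinusoid (μ + ν) (aneg 0) (-a 0) :=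
    rotation_system_unique (f := 0) (g := 0)
      (fun t => by simpa [hμν] using ha t) (fun t => by simpa [hμν] using haneg t)
      (fun t => by simpa [hμν] using hasDerivAt_sinusoid (μ + ν) (a 0) (aneg 0) t)
      (fun t => by
        simpa [hμν, sinusoid_neg] using hasDerivAt_sinusoid (μ + ν) (aneg 0) (-a 0) t)
      (sinusoid_zero _ _ _).symm (sinusoid_zero _ _ _).symm
  obtain ⟨hc_eq, hcneg_eq⟩ :
      c = (fun t => sin (μ * t) / μ * sinusoid ν (a 0) (aneg 0) t) ∧
      cneg = (fun t => sin (μ * t) / μ * sinusoid ν (aneg 0) (-a 0) t) :=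
    rotation_system_unique hc hcneg
      (fun t => (hasDerivAt_sin_div_mul_sinusoid hμ ν (a 0) (aneg 0) t).congr_deriv
        (by rw [hνμ, congrFun ha_eq t]))
      (fun t => (hasDerivAt_sin_div_mul_sinusoid hμ ν (aneg 0) (-a 0) t).congr_deriv
        (by rw [hνμ, sinusoid_neg, congrFun haneg_eq t]; ring))
      (by simp [hc0]) (by simp [hcneg0])
  refine ⟨fun t => ?_, fun k => ?_⟩
  · simp only [hc_eq, sinusoid]
    rw [show μ * t = m * t / (2 * (ℓ + 1)) by ring,
      show ν * t = (2 * ℓ + 3) * m * t / (2 * (ℓ + 1)) by ring, hμ_def, div_div_eq_mul_div]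
    ring
  · have hsin : sin (μ * (4 * k * π * (ℓ + 1) / m)) = 0 := by
      have hμt : μ * (4 * k * π * (ℓ + 1) / m) = (2 * k : ℤ) * π := by
        rw [hμ_def]; push_cast; field_simp; ring
      rw [hμt, sin_int_mul_pi]
    simp [hc_eq, hcneg_eq, hsin]
end

section
/- Let C and D be commuting linear operators on a vector space V, and let Z₁, Z₂: ℝ → V be differentiable curves satisfying Z₁' = C(Z₂ − Z₁) and Δ Z₂' = −C(Z₁ + Z₂ + Δ Z₂) where Δ = −D(Id+D) commutes with C. Then Z₃ := Z₁ − D Z₂ satisfies (D + Id) Z₃' = −(D + 2·Id) C Z₃, and Z₄ := Z₁ + (D + Id) Z₂ satisfies D Z₄' = −(D − Id) C Z₄. -/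
/-- Decoupling of the linearized Euler–Zeitlin equations: with Δ = −D(Id+D)
and C, D commuting, the combinations Z₃ = Z₁ − DZ₂ and Z₄ = Z₁ + (D+Id)Z₂
satisfy (D+Id)Z₃' = −(D+2Id)CZ₃ and DZ₄' = −(D−Id)CZ₄. -/
theorem jacobi_decoupling
    (V : Type*) [NormedAddCommGroup V] [NormedSpace ℝ V] [FiniteDimensional ℝ V]
    (C D : Module.End ℝ V) (hcomm : C * D = D * C)
    (Z₁ Z₂ Z₂' : ℝ → V)
    (hZ₁ : ∀ t, HasDerivAt Z₁ (C (Z₂ t - Z₁ t)) t)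
    (hZ₂ : ∀ t, HasDerivAt Z₂ (Z₂' t) t)
    (hZ₂eq : ∀ t, (-(D * (1 + D))) (Z₂' t) =
      -(C (Z₁ t + Z₂ t + (-(D * (1 + D))) (Z₂ t)))) :
    (∀ t, ∃ w, HasDerivAt (fun s => Z₁ s - D (Z₂ s)) w t ∧
      (D + 1) w = -((D + (2 : ℝ) • 1) (C (Z₁ t - D (Z₂ t))))) ∧
    (∀ t, ∃ w, HasDerivAt (fun s => Z₁ s + (D + 1) (Z₂ s)) w t ∧
      D w = -((D - 1) (C (Z₁ t + (D + 1) (Z₂ t))))) := by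
  have hC : ∀ v : V, C (D v) = D (C v) := fun v => LinearMap.ext_iff.mp hcomm v
  have hDd : ∀ t, HasDerivAt (fun s => D (Z₂ s)) (D (Z₂' t)) t := fun t =>
    ((LinearMap.toContinuousLinearMap D).hasFDerivAt.comp_hasDerivAt t (hZ₂ t))
  have hD1d : ∀ t, HasDerivAt (fun s => (D + 1) (Z₂ s)) ((D + 1) (Z₂' t)) t := fun t =>
    ((LinearMap.toContinuousLinearMap (D + 1)).hasFDerivAt.comp_hasDerivAt t (hZ₂ t))
  constructor
  · intro t
    refine ⟨C (Z₂ t - Z₁ t) - D (Z₂' t), (hZ₁ t).sub (hDd t), ?_⟩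
    have key := hZ₂eq t
    set x := Z₁ t; set y := Z₂ t; set y' := Z₂' t
    simp only [LinearMap.neg_apply, Module.End.mul_apply, LinearMap.add_apply,
      LinearMap.sub_apply, Module.End.one_apply, LinearMap.smul_apply, map_add, map_sub,
      map_neg, map_smul, smul_add, smul_sub, two_smul] at key ⊢
    linear_combination (norm := module) key - hC y + hC (D y)
  · intro t
    refine ⟨C (Z₂ t - Z₁ t) + (D + 1) (Z₂' t), (hZ₁ t).add (hD1d t), ?_⟩
    have key := hZ₂eq t
    set x := Z₁ t; set y := Z₂ t; set y' := Z₂' t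
    simp only [LinearMap.neg_apply, Module.End.mul_apply, LinearMap.add_apply,
      LinearMap.sub_apply, Module.End.one_apply, map_add, map_sub, map_neg] at key ⊢
    linear_combination (norm := module) - key - (2:ℝ) • hC y - hC (D y)
end

section
/- On su(n) × u(n) with the bracket of the Abelian extension [(P₁,B₁),(P₂,B₂)] = ((1/ħ)[P₁,P₂], (1/ħ)[P₁,B₂] − (1/ħ)[P₂,B₁] − (1/ħ)[P₁,P₂]) and the inner product ⟨(P₁,B₁),(P₂,B₂)⟩ = tr(P₁ Δₙ P₂) − tr(B₁ B₂) (Δₙ a symmetric negative-definite operator on su(n) commuting with all ad_{Sα}), a curve (P(t), B(t)) satisfies the Euler–Arnold equation ∂ₜ(P,B) + ad*_{(P,B)}(P,B) = 0 if and only if Δₙ Ṗ + (1/ħ)[P, ΔₙP + B] = 0 and Ḃ + (1/ħ)[P,B] = 0. -/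
/-!
Pairing the weak Euler–Arnold equation with a test element (U, V), the symmetry of Δ and the
bi-invariance tr(A[B,C]) = tr([A,B]C) of the trace form turn its left-hand side into
tr(X U) − tr(Y V), where X = ΔṖ + ħ⁻¹[P, ΔP + B] and Y = Ḃ + ħ⁻¹[P, B] are the residuals of the
strong equations. Derivatives of curves in su(n) and u(n) stay there and Δ preserves su(n), so
X ∈ su(n) and Y ∈ u(n); as the trace form is definite on skew-Hermitian matrices, testing with
(X, 0) and (0, Y) forces X = Y = 0.
-/

open Matrix
open scoped ComplexOrder

namespace Matrix

section Algebra

variable {n R : Type*} [Fintype n]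

theorem trace_mul_commutator [CommRing R] (A B C : Matrix n n R) :
    (A * (B * C - C * B)).trace = ((A * B - B * A) * C).trace := by
  rw [mul_sub, sub_mul, trace_sub, trace_sub, ← Matrix.mul_assoc, ← Matrix.mul_assoc,
    trace_mul_cycle A C B]

theorem trace_mul_commutator_self [CommRing R] (A B : Matrix n n R) :
    (A * (B * A - A * B)).trace = 0 := by
  rw [trace_mul_commutator, sub_mul, trace_sub, Matrix.mul_assoc, trace_mul_comm A (B * A),
    sub_self]

theorem trace_commutator [CommRing R] (A B : Matrix n n R) : (A * B - B * A).trace = 0 := by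
  rw [trace_sub, trace_mul_comm, sub_self]

theorem conjTranspose_smul_commutator [CommRing R] [StarRing R] {c : R} (hc : star c = c)
    {A B : Matrix n n R} (hA : Aᴴ = -A) (hB : Bᴴ = -B) :
    (c • (A * B - B * A))ᴴ = -(c • (A * B - B * A)) := by
  rw [conjTranspose_smul, conjTranspose_sub, conjTranspose_mul, conjTranspose_mul, hA, hB, hc,
    neg_mul_neg, neg_mul_neg, ← smul_neg, neg_sub]

theorem eq_zero_of_conjTranspose_eq_neg_of_trace_mul_self [NonUnitalRing R] [PartialOrder R]
    [StarRing R] [StarOrderedRing R] [NoZeroDivisors R] {A : Matrix n n R} (hA : Aᴴ = -A)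
    (h : (A * A).trace = 0) : A = 0 := by
  rwa [← trace_conjTranspose_mul_self_eq_zero_iff, hA, Matrix.neg_mul, trace_neg, neg_eq_zero]

theorem forall_trace_mul_sub_trace_mul_eq_zero_iff [Ring R] [PartialOrder R] [StarRing R]
    [StarOrderedRing R] [NoZeroDivisors R] {X Y : Matrix n n R} (hX : Xᴴ = -X)
    (hXtr : X.trace = 0) (hY : Yᴴ = -Y) :
    (∀ U V : Matrix n n R, Uᴴ = -U → U.trace = 0 → Vᴴ = -V →
      (X * U).trace - (Y * V).trace = 0) ↔ X = 0 ∧ Y = 0 := by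
  refine ⟨fun h => ⟨?_, ?_⟩, ?_⟩
  · refine eq_zero_of_conjTranspose_eq_neg_of_trace_mul_self hX ?_
    simpa using h X 0 hX hXtr (by simp)
  · refine eq_zero_of_conjTranspose_eq_neg_of_trace_mul_self hY ?_
    simpa using h 0 Y (by simp) (by simp) hY
  · rintro ⟨rfl, rfl⟩
    simp

theorem trace_eulerArnold_weak_form [CommRing R] (Δ : Matrix n n R →ₗ[R] Matrix n n R)
    (hΔsym : ∀ A B, (Δ A * B).trace = (A * Δ B).trace) (c : R) (P B P' B' U V : Matrix n n R) :
    (P' * Δ U).trace - (B' * V).trace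
        + (P * Δ (-c • (P * U - U * P))).trace
        - (B * (-c • (P * V - V * P) + c • (U * B - B * U) + c • (P * U - U * P))).trace
      = ((Δ P' + c • (P * (Δ P + B) - (Δ P + B) * P)) * U).trace
        - ((B' + c • (P * B - B * P)) * V).trace := by
  have hΔP' := hΔsym P' U
  have hΔP := hΔsym P (P * U - U * P)
  have hPU := trace_mul_commutator (Δ P) P U
  have hPV := trace_mul_commutator B P V
  have hBU := trace_mul_commutator B P U
  have hBUB := trace_mul_commutator_self B U
  simp only [neg_smul, map_neg, map_smul, Matrix.mul_smul, Matrix.smul_mul, trace_smul,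
    smul_eq_mul, Matrix.mul_neg, trace_neg, Matrix.mul_add, Matrix.add_mul,
    Matrix.mul_sub, Matrix.sub_mul, trace_add, trace_sub, ← Matrix.mul_assoc]
    at hΔP' hΔP hPU hPV hBU hBUB ⊢
  linear_combination -hΔP' + c * hΔP - c * hPU + c * hPV - c * hBU - c * hBUB

end Algebra

section Calculus

variable {n F : Type*} [NormedAddCommGroup F] [NormedSpace ℝ F]
  {f f' : ℝ → Matrix n n F}

theorem conjTranspose_eq_neg_of_hasDerivAt [StarAddMonoid F] [StarModule ℝ F] [ContinuousStar F]
    (hf : ∀ s, (f s)ᴴ = -(f s)) (hd : ∀ t i j, HasDerivAt (fun s => f s i j) (f' t i j) t)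
    (t : ℝ) : (f' t)ᴴ = -(f' t) := by
  ext i j
  have hskew : (fun s => star (f s j i)) = fun s => -(f s i j) := funext fun s => by
    simpa using congrFun (congrFun (hf s) i) j
  have hstar := (hd t j i).star
  rw [hskew] at hstar
  simpa using hstar.unique (hd t i j).neg

theorem trace_eq_zero_of_hasDerivAt [Fintype n] (hf : ∀ s, (f s).trace = 0)
    (hd : ∀ t i j, HasDerivAt (fun s => f s i j) (f' t i j) t) (t : ℝ) : (f' t).trace = 0 := by
  have htr : HasDerivAt (fun s => (f s).trace) (f' t).trace t :=
    HasDerivAt.fun_sum fun i _ => hd t i i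
  rw [funext hf] at htr
  exact htr.unique (hasDerivAt_const t 0)

end Calculus

end Matrix

theorem euler_arnold_zeitlin_product_general
    (n : ℕ) (hbar : ℝ)
    (Δ : Matrix (Fin n) (Fin n) ℂ →ₗ[ℂ] Matrix (Fin n) (Fin n) ℂ)
    (hΔsu : ∀ A : Matrix (Fin n) (Fin n) ℂ, Aᴴ = -A → A.trace = 0 →
      (Δ A)ᴴ = -(Δ A) ∧ (Δ A).trace = 0)
    (hΔsym : ∀ A B : Matrix (Fin n) (Fin n) ℂ,
      (Δ A * B).trace = (A * Δ B).trace)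
    (P B P' B' : ℝ → Matrix (Fin n) (Fin n) ℂ)
    (hPsu : ∀ t, (P t)ᴴ = -(P t) ∧ (P t).trace = 0)
    (hBsk : ∀ t, (B t)ᴴ = -(B t))
    (hP : ∀ t (i j : Fin n), HasDerivAt (fun s => P s i j) (P' t i j) t)
    (hB : ∀ t (i j : Fin n), HasDerivAt (fun s => B s i j) (B' t i j) t) :
    (∀ t, ∀ U V : Matrix (Fin n) (Fin n) ℂ, Uᴴ = -U → U.trace = 0 → Vᴴ = -V →
      (P' t * Δ U).trace - (B' t * V).trace
        + (P t * Δ (-(hbar : ℂ)⁻¹ • (P t * U - U * P t))).trace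
        - (B t * (-(hbar : ℂ)⁻¹ • (P t * V - V * P t)
            + (hbar : ℂ)⁻¹ • (U * B t - B t * U)
            + (hbar : ℂ)⁻¹ • (P t * U - U * P t))).trace = 0)
    ↔ (∀ t, Δ (P' t) + (hbar : ℂ)⁻¹ •
          (P t * (Δ (P t) + B t) - (Δ (P t) + B t) * P t) = 0
        ∧ B' t + (hbar : ℂ)⁻¹ • (P t * B t - B t * P t) = 0) := by
  have hc : star (hbar : ℂ)⁻¹ = (hbar : ℂ)⁻¹ := by simp
  simp only [trace_eulerArnold_weak_form Δ hΔsym]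
  refine forall_congr' fun t => ?_
  obtain ⟨hPskew, hPtr⟩ := hPsu t
  have hP'skew := conjTranspose_eq_neg_of_hasDerivAt (fun s => (hPsu s).1) hP t
  have hP'tr := trace_eq_zero_of_hasDerivAt (fun s => (hPsu s).2) hP t
  have hB'skew := conjTranspose_eq_neg_of_hasDerivAt hBsk hB t
  obtain ⟨hΔPskew, -⟩ := hΔsu _ hPskew hPtr
  obtain ⟨hΔP'skew, hΔP'tr⟩ := hΔsu _ hP'skew hP'tr
  have hMskew : (Δ (P t) + B t)ᴴ = -(Δ (P t) + B t) := by
    rw [conjTranspose_add, hΔPskew, hBsk t, neg_add]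
  apply forall_trace_mul_sub_trace_mul_eq_zero_iff
  · rw [conjTranspose_add, hΔP'skew, conjTranspose_smul_commutator hc hPskew hMskew, neg_add]
  · rw [trace_add, trace_smul, trace_commutator, hΔP'tr, smul_zero, add_zero]
  · rw [conjTranspose_add, hB'skew, conjTranspose_smul_commutator hc hPskew (hBsk t), neg_add]

/-- The Euler–Arnold equation on su(n) × u(n) for the Abelian-extension bracket
and the metric ⟨(P₁,B₁),(P₂,B₂)⟩ = tr(P₁ΔₙP₂) − tr(B₁B₂): a curve (P,B)
satisfies the weak Euler–Arnold equation
⟨∂ₜ(P,B),(U,V)⟩ + ⟨(P,B), ad_{(P,B)}(U,V)⟩ = 0 for all test elements (U,V)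
if and only if ΔₙṖ + (1/hbar)[P, ΔₙP + B] = 0 and Ḃ + (1/hbar)[P,B] = 0. -/
theorem euler_arnold_zeitlin_product
    (n : ℕ) (hbar : ℝ) (hbar_pos : 0 < hbar)
    (Δ : Matrix (Fin n) (Fin n) ℂ →ₗ[ℂ] Matrix (Fin n) (Fin n) ℂ)
    (hΔsu : ∀ A : Matrix (Fin n) (Fin n) ℂ, Aᴴ = -A → A.trace = 0 →
      (Δ A)ᴴ = -(Δ A) ∧ (Δ A).trace = 0)
    (hΔsym : ∀ A B : Matrix (Fin n) (Fin n) ℂ,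
      (Δ A * B).trace = (A * Δ B).trace)
    (P B P' B' : ℝ → Matrix (Fin n) (Fin n) ℂ)
    (hPsu : ∀ t, (P t)ᴴ = -(P t) ∧ (P t).trace = 0)
    (hBsk : ∀ t, (B t)ᴴ = -(B t))
    (hP : ∀ t (i j : Fin n), HasDerivAt (fun s => P s i j) (P' t i j) t)
    (hB : ∀ t (i j : Fin n), HasDerivAt (fun s => B s i j) (B' t i j) t) :
    (∀ t, ∀ U V : Matrix (Fin n) (Fin n) ℂ, Uᴴ = -U → U.trace = 0 → Vᴴ = -V →
      (P' t * Δ U).trace - (B' t * V).trace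
        + (P t * Δ (-(hbar : ℂ)⁻¹ • (P t * U - U * P t))).trace
        - (B t * (-(hbar : ℂ)⁻¹ • (P t * V - V * P t)
            + (hbar : ℂ)⁻¹ • (U * B t - B t * U)
            + (hbar : ℂ)⁻¹ • (P t * U - U * P t))).trace = 0)
    ↔ (∀ t, Δ (P' t) + (hbar : ℂ)⁻¹ •
          (P t * (Δ (P t) + B t) - (Δ (P t) + B t) * P t) = 0
        ∧ B' t + (hbar : ℂ)⁻¹ • (P t * B t - B t * P t) = 0) :=
  euler_arnold_zeitlin_product_general n hbar Δ hΔsu hΔsym P B P' B' hPsu hBsk hP hB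
end

section
/- With the curvature formula ⟨R(U,V)V,U⟩ = ¼|ad*_U V + ad*_V U + ad_U V|² − ⟨ad*_U V + ad_U V, ad_U V⟩ − ⟨ad*_U U, ad*_V V⟩ on su(2)×su(2) ≅ ℝ³×ℝ³ with the bracket and metric of the n=2 Zeitlin model (⟨(Y₁,X₁),(Y₂,X₂)⟩ = Y₁·Y₂ + 2X₁·X₂, ad_{(Y₁,X₁)}(Y₃,X₃) = (−X₁×Y₃ − Y₁×X₃ + X₁×X₃, −X₁×X₃), ad*_{(Y₁,X₁)}(Y₂,X₂) = (X₁×Y₂, ½(Y₁×Y₂ − X₁×Y₂) + X₁×X₂)), one has for U = (0, eᵢ) and V = (Y₂, X₂): ⟨R(U,V)V,U⟩ = −¾|eᵢ × X₂|² + ⅛|eᵢ × (Y₂ + 2X₂)|², and for U = (eᵢ, 0) and V = (Y₂, X₂): ⟨R(U,V)V,U⟩ = ⅛|eᵢ × X₂|². -/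
/-- Arnold's sectional curvature expression ⟨R(U,V)V,U⟩. -/
noncomputable def sec2 (U V : (Fin 3 → ℝ) × (Fin 3 → ℝ)) : ℝ :=
  (1/4 : ℝ) * ip2 (adStar2 U V + adStar2 V U + ad2 U V) (adStar2 U V + adStar2 V U + ad2 U V)
  - ip2 (adStar2 U V + ad2 U V) (ad2 U V)
  - ip2 (adStar2 U U) (adStar2 V V)

set_option maxHeartbeats 2000000 in
/-- Sectional curvature values along the basis directions in the n = 2
Zeitlin model. -/
theorem sectional_curvature_basis (i : Fin 3) (Y₂ X₂ : Fin 3 → ℝ) :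
    sec2 ((0 : Fin 3 → ℝ), Pi.single i 1) (Y₂, X₂)
      = -(3/4 : ℝ) * dot3 (cross3 (Pi.single i 1) X₂) (cross3 (Pi.single i 1) X₂)
        + (1/8 : ℝ) * dot3 (cross3 (Pi.single i 1) (Y₂ + (2 : ℝ) • X₂))
            (cross3 (Pi.single i 1) (Y₂ + (2 : ℝ) • X₂)) ∧
    sec2 (Pi.single i 1, (0 : Fin 3 → ℝ)) (Y₂, X₂)
      = (1/8 : ℝ) * dot3 (cross3 (Pi.single i 1) X₂) (cross3 (Pi.single i 1) X₂) := by
  fin_cases i <;>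
  refine ⟨?_, ?_⟩ <;>
  · simp only [sec2, ip2, ad2, adStar2, cross3, dot3, Pi.add_apply, Pi.sub_apply,
      Pi.neg_apply, Pi.smul_apply, Prod.fst_add, Prod.snd_add, Fin.sum_univ_three,
      Pi.single_apply, Pi.zero_apply, smul_eq_mul, Fin.ext_iff, Fin.isValue,
      Matrix.cons_val_zero, Matrix.cons_val_one, Matrix.head_cons,
      Matrix.cons_val_two, Matrix.tail_cons]
    norm_num
    ring
end
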